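/- Let b_n = (n+1)! (so b_n = ∏_{k=1}^n (k+1)) and define t(ω) := ∑_{n≥1} ω_n/b_n for ω ∈ {0,1}^ℕ. Then the map t is injective, and t(ω) ∈ G₂(b) for every ω; in particular G₂(b) is uncountable. -/
import Mathlib


/-- `G₂(b)` inside the circle `ℝ/ℤ`; the norm on `AddCircle (1:ℝ)` is the
distance to the nearest integer. -/
noncomputable def G2 (b : ℕ → ℕ) : Set (AddCircle (1:ℝ)) :=
  {t | Summable (fun n => ‖b n • t‖ ^ 2)}

namespace Stmt13Aux

open Finset

/-- Factorial growth: `(m+2)! * 2^n ≤ (n+m+2)!`. -/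
lemma fact_ge (m n : ℕ) : (m + 2).factorial * 2 ^ n ≤ (n + m + 2).factorial := by
  induction n with
  | zero => simp
  | succ k ih =>
      have h1 : (k + 1 + m + 2) = (k + m + 2) + 1 := by ring
      have hs : ((k + m + 2) + 1).factorial = ((k + m + 2) + 1) * (k + m + 2).factorial :=
        Nat.factorial_succ _
      have hp : 2 ^ (k + 1) = 2 ^ k * 2 := pow_succ 2 k
      rw [h1, hs, hp]
      nlinarith [ih]

/-- `2 * 3^n ≤ (n+2)!`. -/
lemma fact_ge3 (n : ℕ) : 2 * 3 ^ n ≤ (n + 2).factorial := by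
  induction n with
  | zero => simp
  | succ k ih =>
      have hs : ((k + 2) + 1).factorial = ((k + 2) + 1) * (k + 2).factorial :=
        Nat.factorial_succ _
      have h1 : (k + 1 + 2) = (k + 2) + 1 := by ring
      have hp : 3 ^ (k + 1) = 3 ^ k * 3 := pow_succ 3 k
      rw [h1, hs, hp]
      nlinarith [ih]

lemma fact_pos_real (n : ℕ) : (0:ℝ) < (n.factorial : ℝ) := by
  exact_mod_cast n.factorial_pos

/-- `1/(n+m+2)! ≤ (1/(m+2)!) * (1/2)^n`. -/
lemma inv_fact_le (m n : ℕ) :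
    (1:ℝ) / ((n + m + 2).factorial : ℝ) ≤ (1 / ((m + 2).factorial : ℝ)) * (1/2) ^ n := by
  have h' : ((m + 2).factorial : ℝ) * 2 ^ n ≤ ((n + m + 2).factorial : ℝ) := by
    exact_mod_cast fact_ge m n
  have hrw : (1 / ((m + 2).factorial : ℝ)) * (1/2) ^ n
      = 1 / (((m + 2).factorial : ℝ) * 2 ^ n) := by
    rw [div_pow, one_pow, div_mul_div_comm, one_mul]
  rw [hrw]
  exact one_div_le_one_div_of_le (by positivity) h'

/-- `1/(n+2)! ≤ (1/2) * (1/3)^n`. -/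
lemma inv_fact_le3 (n : ℕ) :
    (1:ℝ) / ((n + 2).factorial : ℝ) ≤ (1/2) * (1/3) ^ n := by
  have h' : (2:ℝ) * 3 ^ n ≤ ((n + 2).factorial : ℝ) := by
    exact_mod_cast fact_ge3 n
  have hrw : ((1:ℝ)/2) * (1/3) ^ n = 1 / ((2:ℝ) * 3 ^ n) := by
    rw [div_pow, one_pow, div_mul_div_comm, one_mul]
  rw [hrw]
  exact one_div_le_one_div_of_le (by positivity) h'

lemma summable_rho (m : ℕ) : Summable (fun n : ℕ => (1:ℝ) / ((n + m + 2).factorial : ℝ)) := by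
  refine Summable.of_nonneg_of_le (fun n => by positivity) (fun n => inv_fact_le m n) ?_
  exact (summable_geometric_of_lt_one (by norm_num) (by norm_num)).mul_left _

lemma tsum_rho_le (m : ℕ) :
    ∑' n : ℕ, (1:ℝ) / ((n + m + 2).factorial : ℝ) ≤ 2 / ((m + 2).factorial : ℝ) := by
  have h1 : ∑' n : ℕ, (1:ℝ) / ((n + m + 2).factorial : ℝ)
      ≤ ∑' n : ℕ, (1 / ((m + 2).factorial : ℝ)) * (1/2) ^ n :=
    Summable.tsum_le_tsum (fun n => inv_fact_le m n) (summable_rho m)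
      ((summable_geometric_of_lt_one (by norm_num) (by norm_num)).mul_left _)
  rw [tsum_mul_left, tsum_geometric_of_lt_one (by norm_num) (by norm_num)] at h1
  have h4 : ((1:ℝ) - 1/2)⁻¹ = 2 := by norm_num
  rw [h4] at h1
  calc _ ≤ 1 / ((m + 2).factorial : ℝ) * 2 := h1
    _ = 2 / ((m + 2).factorial : ℝ) := by ring

/-- The digit function. -/
noncomputable def a (ω : ℕ → Bool) (n : ℕ) : ℝ :=
  cond (ω n) ((1:ℝ) / ((n + 2).factorial : ℝ)) 0

lemma a_nonneg (ω : ℕ → Bool) (n : ℕ) : 0 ≤ a ω n := by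
  unfold a
  cases ω n
  · simp
  · simp only [cond_true]; positivity

lemma a_le (ω : ℕ → Bool) (n : ℕ) : a ω n ≤ 1 / ((n + 2).factorial : ℝ) := by
  unfold a
  cases ω n
  · simp only [cond_false]; positivity
  · simp

lemma abs_sub_le (ω ω' : ℕ → Bool) (n : ℕ) :
    |a ω n - a ω' n| ≤ 1 / ((n + 2).factorial : ℝ) := by
  rw [abs_sub_le_iff]
  constructor
  · have := a_le ω n; have := a_nonneg ω' n; linarith
  · have := a_le ω' n; have := a_nonneg ω n; linarith

lemma summable_a (ω : ℕ → Bool) : Summable (a ω) := by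
  refine Summable.of_nonneg_of_le (a_nonneg ω) (fun n => a_le ω n) ?_
  simpa using summable_rho 0

lemma norm_coe_le_abs (x : ℝ) : ‖(x : AddCircle (1:ℝ))‖ ≤ |x| := by
  rw [AddCircle.norm_eq]
  simpa using round_le x 0

end Stmt13Aux

open Stmt13Aux Finset

/-- With `bₙ = (n+1)!` and `t(ω) := ∑_{n ≥ 1} ωₙ / bₙ` for `ω ∈ {0,1}^ℕ`
(here `ω n : Bool` stands for `ω_{n+1}`), the map `t` is injective and
`t(ω) ∈ G₂(b)` for every `ω`; in particular `G₂(b)` is uncountable. -/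
theorem stmt13 (b : ℕ → ℕ) (hb : ∀ n, b n = Nat.factorial (n + 1))
    (t : (ℕ → Bool) → ℝ)
    (ht : ∀ ω, t ω = ∑' n : ℕ, (cond (ω n) ((1 : ℝ) / (b (n + 1) : ℝ)) 0)) :
    Function.Injective t ∧ (∀ ω, ((t ω : ℝ) : AddCircle (1:ℝ)) ∈ G2 b) ∧
      ¬ (G2 b).Countable := by
  classical
  have ht' : ∀ ω, t ω = ∑' n : ℕ, a ω n := by
    intro ω
    rw [ht ω]
    congr 1; funext n
    unfold a
    rw [hb (n + 1)]
  -- tail bounds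
  have tail_le : ∀ (ω : ℕ → Bool) (m : ℕ),
      ∑' n : ℕ, a ω (n + m) ≤ 2 / ((m + 2).factorial : ℝ) := by
    intro ω m
    have hs : Summable fun n => a ω (n + m) :=
      (summable_a ω).comp_injective (add_left_injective m)
    calc ∑' n : ℕ, a ω (n + m)
        ≤ ∑' n : ℕ, (1:ℝ) / ((n + m + 2).factorial : ℝ) :=
          Summable.tsum_le_tsum (fun n => a_le ω (n + m)) hs (summable_rho m)
      _ ≤ 2 / ((m + 2).factorial : ℝ) := tsum_rho_le m
  -- Injectivity
  have hinj : Function.Injective t := by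
    intro ω ω' h
    by_contra hne
    have hex : ∃ n, ω n ≠ ω' n := by
      by_contra hc
      push_neg at hc
      exact hne (funext hc)
    set m := Nat.find hex with hm
    have hdm : ω m ≠ ω' m := Nat.find_spec hex
    have hlt : ∀ k < m, ω k = ω' k := fun k hk => by
      by_contra hc; exact Nat.find_min hex hk hc
    set d : ℕ → ℝ := fun n => a ω n - a ω' n with hd
    have hsumd : Summable d := (summable_a ω).sub (summable_a ω')
    have htsum0 : ∑' n, d n = 0 := by
      rw [hd, Summable.tsum_sub (summable_a ω) (summable_a ω'), ← ht' ω, ← ht' ω', h]; ring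
    have hsplit : ∑ i ∈ range (m+1), d i + ∑' i, d (i + (m+1)) = ∑' i, d i :=
      Summable.sum_add_tsum_nat_add (m+1) hsumd
    have hfin : ∑ i ∈ range (m+1), d i = d m := by
      rw [Finset.sum_range_succ]
      have h0 : ∑ i ∈ range m, d i = 0 := by
        refine Finset.sum_eq_zero fun i hi => ?_
        have := hlt i (Finset.mem_range.mp hi)
        simp [hd, a, this]
      rw [h0, zero_add]
    have habsd : |d m| = 1 / ((m + 2).factorial : ℝ) := by
      cases h1 : ω m <;> cases h2 : ω' m
      · exact absurd (h1.trans h2.symm) hdm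
      · simp only [hd, a, h1, h2, cond_true, cond_false]
        rw [zero_sub, abs_neg, abs_of_nonneg (by positivity)]
      · simp only [hd, a, h1, h2, cond_true, cond_false]
        rw [sub_zero, abs_of_nonneg (by positivity)]
      · exact absurd (h1.trans h2.symm) hdm
    have hsd : Summable fun i => d (i + (m+1)) :=
      hsumd.comp_injective (add_left_injective (m+1))
    have htail : |∑' i, d (i + (m+1))| ≤ 2 / ((m + 1 + 2).factorial : ℝ) := by
      have h1 : |∑' i, d (i + (m+1))| ≤ ∑' i, |d (i + (m+1))| := by
        simpa [Real.norm_eq_abs] using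
          norm_tsum_le_tsum_norm (f := fun i => d (i + (m+1)))
            (by simpa [Real.norm_eq_abs] using hsd.abs)
      refine h1.trans ?_
      calc ∑' i, |d (i + (m+1))|
          ≤ ∑' i : ℕ, (1:ℝ) / ((i + (m+1) + 2).factorial : ℝ) :=
            Summable.tsum_le_tsum (fun i => abs_sub_le ω ω' _) hsd.abs (summable_rho (m+1))
        _ ≤ 2 / ((m + 1 + 2).factorial : ℝ) := tsum_rho_le (m+1)
    have key : d m = - ∑' i, d (i + (m+1)) := by
      have h0 := hsplit.trans htsum0
      rw [hfin] at h0; linarith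
    have hcontra : |d m| ≤ 2 / ((m + 1 + 2).factorial : ℝ) := by
      rw [key, abs_neg]; exact htail
    rw [habsd] at hcontra
    have hgt : 2 / ((m + 1 + 2).factorial : ℝ) < 1 / ((m + 2).factorial : ℝ) := by
      have h3 : ((m + 1 + 2).factorial : ℝ) = (m + 3) * ((m + 2).factorial : ℝ) := by
        have he : (m + 1 + 2) = (m + 2) + 1 := by ring
        rw [he, Nat.factorial_succ]; push_cast; ring
      rw [h3, div_lt_div_iff₀ (by positivity) (fact_pos_real _)]
      have := fact_pos_real (m+2)
      nlinarith
    linarith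
  -- Membership in G2
  have hmem : ∀ ω, ((t ω : ℝ) : AddCircle (1:ℝ)) ∈ G2 b := by
    intro ω
    rw [G2, Set.mem_setOf_eq]
    have hbound : ∀ N : ℕ, ‖(b N : ℕ) • ((t ω : ℝ) : AddCircle (1:ℝ))‖ ≤ 2 / (N + 2 : ℝ) := by
      intro N
      set K : ℕ := ∑ n ∈ range N, (if ω n then (N+1).factorial / (n+2).factorial else 0)
        with hK
      have hcast : ∀ n < N, ((if ω n then (N+1).factorial / (n+2).factorial else 0 : ℕ) : ℝ)
          = ((N+1).factorial : ℝ) * a ω n := by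
        intro n hn
        have hdvd : (n+2).factorial ∣ (N+1).factorial :=
          Nat.factorial_dvd_factorial (by omega)
        cases h1 : ω n
        · simp [a, h1]
        · simp only [h1, if_true, a, cond_true]
          rw [Nat.cast_div hdvd (by exact_mod_cast (n+2).factorial_pos.ne'), mul_one_div]
      have hsum : ((b N : ℕ) : ℝ) * t ω
          = (K : ℝ) + ((N+1).factorial : ℝ) * ∑' n, a ω (n + N) := by
        rw [hb N, ht' ω, ← tsum_mul_left,
          ← Summable.sum_add_tsum_nat_add N ((summable_a ω).mul_left _)]
        congr 1
        · rw [hK, Nat.cast_sum]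
          exact Finset.sum_congr rfl fun n hn => (hcast n (Finset.mem_range.mp hn)).symm
        · exact tsum_mul_left
      have htail_nonneg : 0 ≤ ∑' n, a ω (n + N) := tsum_nonneg fun n => a_nonneg ω _
      have htail_le : ((N+1).factorial : ℝ) * ∑' n, a ω (n + N) ≤ 2 / (N + 2 : ℝ) := by
        have h1 := tail_le ω N
        have h2 : ((N+1).factorial : ℝ) * (2 / ((N + 2).factorial : ℝ)) = 2 / (N + 2 : ℝ) := by
          have he : ((N + 2).factorial : ℝ) = (N + 2) * ((N + 1).factorial : ℝ) := by
            have : (N + 2) = (N + 1) + 1 := rfl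
            rw [this, Nat.factorial_succ]; push_cast; ring
          rw [he]
          have := fact_pos_real (N+1)
          field_simp
        calc ((N+1).factorial : ℝ) * ∑' n, a ω (n + N)
            ≤ ((N+1).factorial : ℝ) * (2 / ((N + 2).factorial : ℝ)) :=
              mul_le_mul_of_nonneg_left h1 (by positivity)
          _ = 2 / (N + 2 : ℝ) := h2
      have hz : (((K : ℝ)) : AddCircle (1:ℝ)) = 0 := by
        rw [AddCircle.coe_eq_zero_iff]
        exact ⟨K, by simp⟩
      have e1 : (b N : ℕ) • ((t ω : ℝ) : AddCircle (1:ℝ))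
          = ((((b N : ℕ) : ℝ) * t ω : ℝ) : AddCircle (1:ℝ)) := by
        rw [← AddCircle.coe_nsmul, nsmul_eq_mul]
      have e2 : ((((b N : ℕ) : ℝ) * t ω : ℝ) : AddCircle (1:ℝ))
          = ((((b N : ℕ) : ℝ) * t ω - (K : ℝ) : ℝ) : AddCircle (1:ℝ)) := by
        rw [AddCircle.coe_sub, hz, sub_zero]
      rw [e1, e2]
      refine (norm_coe_le_abs _).trans ?_
      have habs : ((b N : ℕ) : ℝ) * t ω - (K : ℝ)
          = ((N+1).factorial : ℝ) * ∑' n, a ω (n + N) := by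
        rw [hsum]; ring
      rw [habs, abs_of_nonneg (mul_nonneg (by positivity) htail_nonneg)]
      exact htail_le
    refine Summable.of_nonneg_of_le (f := fun n : ℕ => (2 / (n + 2 : ℝ))^2)
      (fun n => by positivity) (fun n => ?_) ?_
    · exact pow_le_pow_left₀ (norm_nonneg _) (hbound n) 2
    · have h1 : Summable (fun n : ℕ => (1:ℝ)/(n:ℝ)^2) := by
        exact_mod_cast (Real.summable_one_div_nat_pow (p := 2)).2 one_lt_two
      have h2 : Summable (fun n : ℕ => (1:ℝ)/((n:ℝ)+2)^2) := by
        have h3 := (summable_nat_add_iff (f := fun n : ℕ => (1:ℝ)/(n:ℝ)^2) 2).2 h1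
        refine h3.congr fun n => ?_
        push_cast
        ring
      refine (h2.mul_left 4).congr fun n => ?_
      rw [div_pow]
      norm_num
      ring
  refine ⟨hinj, hmem, ?_⟩
  -- Uncountability
  intro hcount
  have ht34 : ∀ ω, t ω ≤ 3/4 := by
    intro ω
    rw [ht' ω]
    calc ∑' n, a ω n ≤ ∑' n : ℕ, (1/2) * ((1:ℝ)/3)^n :=
          Summable.tsum_le_tsum (fun n => (a_le ω n).trans (inv_fact_le3 n)) (summable_a ω)
            ((summable_geometric_of_lt_one (by norm_num) (by norm_num)).mul_left _)
      _ = (1/2) * (1 - 1/3)⁻¹ := by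
          rw [tsum_mul_left, tsum_geometric_of_lt_one (by norm_num) (by norm_num)]
      _ = 3/4 := by norm_num
  have ht0 : ∀ ω, 0 ≤ t ω := by
    intro ω
    rw [ht' ω]
    exact tsum_nonneg fun n => a_nonneg ω n
  haveI : Fact ((0:ℝ) < 1) := ⟨zero_lt_one⟩
  set g : (ℕ → Bool) → AddCircle (1:ℝ) := fun ω => ((t ω : ℝ) : AddCircle (1:ℝ)) with hg
  have hinjc : Function.Injective g := by
    intro ω ω' h
    apply hinj
    rw [hg] at h
    have hmemx : t ω ∈ Set.Ico (0:ℝ) (0 + 1) := ⟨ht0 ω, by linarith [ht34 ω]⟩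
    have hmemy : t ω' ∈ Set.Ico (0:ℝ) (0 + 1) := ⟨ht0 ω', by linarith [ht34 ω']⟩
    exact (AddCircle.coe_eq_coe_iff_of_mem_Ico hmemx hmemy).mp h
  have hrange : Set.range g ⊆ G2 b := by
    rintro _ ⟨ω, rfl⟩
    exact hmem ω
  have hc2 : (Set.range g).Countable := hcount.mono hrange
  haveI := hc2.to_subtype
  have hcbool : Countable (ℕ → Bool) :=
    Function.Injective.countable (f := Set.rangeFactorization g)
      (fun x y hxy => hinjc (congrArg Subtype.val hxy))
  -- but ℕ → Bool is uncountable, via Set ℕ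
  have hsetinj : Function.Injective (fun s : Set ℕ => (fun n => decide (n ∈ s) : ℕ → Bool)) := by
    intro s s' hs
    ext n
    have := congrFun hs n
    simpa [decide_eq_decide] using this
  haveI : Countable (ℕ → Bool) := hcbool
  haveI : Countable (Set ℕ) := hsetinj.countable
  obtain ⟨f, hf⟩ := Countable.exists_injective_nat (Set ℕ)
  exact Function.cantor_injective f hf
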